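/- arXiv:2412.17695 — 4 statements merged into one kernel-verified Lean document; each statement's English description precedes it below -/
import Mathlib

section
/- For every θ ∈ ℝⁿ and every b ∈ ℝᴺ, the least-squares problem min over η ∈ ℝⁿ of ‖J(θ)η − b‖₂² has a unique solution: there exists exactly one η* ∈ ℝⁿ with ‖J(θ)η* − b‖₂² ≤ ‖J(θ)η − b‖₂² for all η ∈ ℝⁿ. -/
open Matrix

/-- For every `θ ∈ ℝⁿ` and `b ∈ ℝᴺ`, the least-squares problem
`min over η of ‖J(θ)η − b‖₂²` has a unique solution: there is exactly one `η*` with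
`‖J(θ)η* − b‖₂² ≤ ‖J(θ)η − b‖₂²` for all `η ∈ ℝⁿ`. -/
theorem least_squares_unique_solution
    (N n : ℕ) (hN : 0 < N) (hn : 0 < n)
    (V : Matrix (Fin N) (Fin n) ℝ) (W : Matrix (Fin N) (Fin n × Fin n) ℝ)
    (hV : Vᵀ * V = 1) (hVW : Vᵀ * W = 0)
    (K : (Fin n → ℝ) → Matrix (Fin N) (Fin n) ℝ)
    (hK : ∀ θ v, (K θ).mulVec v = W.mulVec (fun p => θ p.1 * v p.2 + v p.1 * θ p.2)) :
    ∀ (θ : Fin n → ℝ) (b : Fin N → ℝ),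
      ∃! ηstar : Fin n → ℝ, ∀ η : Fin n → ℝ,
        ∑ i, (((V + K θ).mulVec ηstar - b) i) ^ 2 ≤ ∑ i, (((V + K θ).mulVec η - b) i) ^ 2 := by
  intro θ b
  set A : Matrix (Fin N) (Fin n) ℝ := V + K θ with hA
  -- adjoint lemma
  have adj : ∀ (N' n' : ℕ) (M : Matrix (Fin N') (Fin n') ℝ) (u : Fin n' → ℝ) (x : Fin N' → ℝ),
      M.mulVec u ⬝ᵥ x = u ⬝ᵥ Mᵀ.mulVec x := by
    intro N' n' M u x
    rw [Matrix.mulVec_transpose, dotProduct_comm (M *ᵥ u) x, Matrix.dotProduct_mulVec,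
      dotProduct_comm]
  have dsn : ∀ {m : ℕ} (v : Fin m → ℝ), (0:ℝ) ≤ v ⬝ᵥ v := fun v =>
    Finset.sum_nonneg fun i _ => mul_self_nonneg _
  have sq_eq : ∀ (x : Fin N → ℝ), ∑ i, (x i)^2 = x ⬝ᵥ x := by
    intro x; simp [dotProduct, pow_two]
  -- Vᵀ ∘ K θ = 0 as action on vectors
  have hVK : ∀ v : Fin n → ℝ, Vᵀ.mulVec ((K θ).mulVec v) = 0 := by
    intro v
    rw [hK, Matrix.mulVec_mulVec, hVW, Matrix.zero_mulVec]
  have hVVv : ∀ v : Fin n → ℝ, Vᵀ.mulVec (V.mulVec v) = v := by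
    intro v
    rw [Matrix.mulVec_mulVec, hV, Matrix.one_mulVec]
  -- key quadratic identity
  have quad : ∀ v : Fin n → ℝ,
      A.mulVec v ⬝ᵥ A.mulVec v = v ⬝ᵥ v + ((K θ).mulVec v ⬝ᵥ (K θ).mulVec v) := by
    intro v
    have hAv : A.mulVec v = V.mulVec v + (K θ).mulVec v := by
      rw [hA, Matrix.add_mulVec]
    rw [hAv]
    have c1 : V.mulVec v ⬝ᵥ (K θ).mulVec v = 0 := by
      rw [adj, hVK]; simp
    have c2 : (K θ).mulVec v ⬝ᵥ V.mulVec v = 0 := by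
      rw [dotProduct_comm, c1]
    have c3 : V.mulVec v ⬝ᵥ V.mulVec v = v ⬝ᵥ v := by
      rw [adj, hVVv]
    rw [add_dotProduct, dotProduct_add, dotProduct_add, c1, c2, c3]
    ring
  -- norm lower bound
  have lb : ∀ v : Fin n → ℝ, v ⬝ᵥ v ≤ A.mulVec v ⬝ᵥ A.mulVec v := by
    intro v
    rw [quad]
    have : (0:ℝ) ≤ (K θ).mulVec v ⬝ᵥ (K θ).mulVec v := dsn _
    linarith
  -- the normal-equations linear map is injective, hence surjective
  have hinj : Function.Injective (Matrix.mulVecLin (Aᵀ * A)) := by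
    rw [injective_iff_map_eq_zero]
    intro v hv
    have h0 : Aᵀ.mulVec (A.mulVec v) = 0 := by
      rw [Matrix.mulVec_mulVec]
      rw [Matrix.mulVecLin_apply] at hv
      exact hv
    have h1 : A.mulVec v ⬝ᵥ A.mulVec v = 0 := by
      rw [adj, h0, dotProduct_zero]
    have h2 : v ⬝ᵥ v ≤ 0 := h1 ▸ lb v
    have h3 : (0:ℝ) ≤ v ⬝ᵥ v := dsn _
    have h4 : v ⬝ᵥ v = 0 := le_antisymm h2 h3
    exact dotProduct_self_eq_zero.mp h4
  have hsurj : Function.Surjective (Matrix.mulVecLin (Aᵀ * A)) :=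
    (LinearMap.injective_iff_surjective).mp hinj
  obtain ⟨ηstar, hη⟩ := hsurj (Aᵀ.mulVec b)
  have hnormal : Aᵀ.mulVec (A.mulVec ηstar - b) = 0 := by
    have : Aᵀ.mulVec (A.mulVec ηstar) = Aᵀ.mulVec b := by
      rw [Matrix.mulVec_mulVec]
      rw [Matrix.mulVecLin_apply] at hη
      exact hη
    rw [Matrix.mulVec_sub, this, sub_self]
  set r : Fin N → ℝ := A.mulVec ηstar - b with hr
  -- decomposition: for any η, ‖Aη - b‖² = ‖r‖² + ‖A(η-ηstar)‖²
  have decomp : ∀ η : Fin n → ℝ,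
      (A.mulVec η - b) ⬝ᵥ (A.mulVec η - b)
        = r ⬝ᵥ r + (A.mulVec (η - ηstar) ⬝ᵥ A.mulVec (η - ηstar)) := by
    intro η
    have hsplit : A.mulVec η - b = r + A.mulVec (η - ηstar) := by
      rw [hr, Matrix.mulVec_sub]; abel
    have cross : A.mulVec (η - ηstar) ⬝ᵥ r = 0 := by
      rw [adj, hnormal, dotProduct_zero]
    have cross' : r ⬝ᵥ A.mulVec (η - ηstar) = 0 := by
      rw [dotProduct_comm, cross]
    rw [hsplit, add_dotProduct, dotProduct_add, dotProduct_add,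
      cross, cross']
    ring
  refine ⟨ηstar, ?_, ?_⟩
  · intro η
    rw [sq_eq, sq_eq, decomp η]
    have h1 : (0:ℝ) ≤ (η - ηstar) ⬝ᵥ (η - ηstar) := dsn _
    have h2 := lb (η - ηstar)
    have : (A.mulVec ηstar - b) ⬝ᵥ (A.mulVec ηstar - b) = r ⬝ᵥ r := by rw [hr]
    linarith [this.ge, this.le]
  · intro η hη'
    have h1 := hη' ηstar
    rw [sq_eq, sq_eq, decomp ηstar, decomp η] at h1
    have h2 : A.mulVec (ηstar - ηstar) ⬝ᵥ A.mulVec (ηstar - ηstar) = 0 := by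
      simp
    rw [h2] at h1
    have h3 := lb (η - ηstar)
    have h4 : (0:ℝ) ≤ (η - ηstar) ⬝ᵥ (η - ηstar) := dsn _
    have h5 : (η - ηstar) ⬝ᵥ (η - ηstar) = 0 := by linarith
    have h6 : η - ηstar = 0 := dotProduct_self_eq_zero.mp h5
    exact sub_eq_zero.mp h6
end

section
/- For each θ ∈ ℝⁿ and b ∈ ℝᴺ, the function η ↦ ‖J(θ)η − b‖₂² is strictly convex on ℝⁿ. -/
open Matrix

/-- For each `θ ∈ ℝⁿ` and `b ∈ ℝᴺ`, the function `η ↦ ‖J(θ)η − b‖₂²` is strictly convex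
on `ℝⁿ`. -/
theorem least_squares_strictConvexOn
    (N n : ℕ) (hN : 0 < N) (hn : 0 < n)
    (V : Matrix (Fin N) (Fin n) ℝ) (W : Matrix (Fin N) (Fin n × Fin n) ℝ)
    (hV : Vᵀ * V = 1) (hVW : Vᵀ * W = 0)
    (K : (Fin n → ℝ) → Matrix (Fin N) (Fin n) ℝ)
    (hK : ∀ θ v, (K θ).mulVec v = W.mulVec (fun p => θ p.1 * v p.2 + v p.1 * θ p.2)) :
    ∀ (θ : Fin n → ℝ) (b : Fin N → ℝ),
      StrictConvexOn ℝ Set.univ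
        (fun η : Fin n → ℝ => ∑ i, (((V + K θ).mulVec η - b) i) ^ 2) := by
  intro θ b
  set J := V + K θ with hJ
  have hinj : ∀ w : Fin n → ℝ, J.mulVec w = 0 → w = 0 := by
    intro w hw
    have h1 : Vᵀ.mulVec (J.mulVec w) = w := by
      have h2 : Vᵀ.mulVec (J.mulVec w)
          = Vᵀ.mulVec (V.mulVec w) + Vᵀ.mulVec ((K θ).mulVec w) := by
        rw [hJ, Matrix.add_mulVec, Matrix.mulVec_add]
      have h3 : Vᵀ.mulVec ((K θ).mulVec w) = 0 := by
        rw [hK, Matrix.mulVec_mulVec, hVW, Matrix.zero_mulVec]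
      rw [h2, h3, add_zero, Matrix.mulVec_mulVec, hV, Matrix.one_mulVec]
    rw [hw, Matrix.mulVec_zero] at h1
    exact h1.symm
  refine ⟨convex_univ, ?_⟩
  intro x _ y _ hxy t s ht hs hts
  set u : Fin N → ℝ := J.mulVec x - b with hu
  set v : Fin N → ℝ := J.mulVec y - b with hv
  have key : ∀ i, (J.mulVec (t • x + s • y) - b) i = t * u i + s * v i := by
    intro i
    simp only [hu, hv, Pi.sub_apply, Matrix.mulVec_add, Matrix.mulVec_smul,
      Pi.add_apply, Pi.smul_apply, smul_eq_mul]
    linear_combination (b i) * hts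
  have hne : u ≠ v := by
    intro h
    apply hxy
    have h4 : J.mulVec (x - y) = 0 := by
      rw [Matrix.mulVec_sub]
      have : J.mulVec x - b = J.mulVec y - b := h
      have h5 : J.mulVec x = J.mulVec y := by
        have := congrArg (· + b) this
        simpa using this
      rw [h5, sub_self]
    have := hinj _ h4
    exact sub_eq_zero.mp this
  obtain ⟨i0, hi0⟩ := Function.ne_iff.mp hne
  have hsum : 0 < ∑ i, (u i - v i) ^ 2 := by
    apply Finset.sum_pos'
    · intro i _; positivity
    · refine ⟨i0, Finset.mem_univ i0, ?_⟩
      have : u i0 - v i0 ≠ 0 := sub_ne_zero.mpr hi0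
      exact pow_pos (abs_pos.mpr this) 2 |>.trans_le (by rw [sq_abs])
  show (∑ i, ((J.mulVec (t • x + s • y) - b) i) ^ 2)
      < t • (∑ i, (u i) ^ 2) + s • (∑ i, (v i) ^ 2)
  simp only [smul_eq_mul]
  calc (∑ i, ((J.mulVec (t • x + s • y) - b) i) ^ 2)
      = ∑ i, (t * u i + s * v i) ^ 2 := by
        exact Finset.sum_congr rfl fun i _ => by rw [key i]
    _ = ∑ i, (t * (u i) ^ 2 + s * (v i) ^ 2 - t * s * (u i - v i) ^ 2) := by
        refine Finset.sum_congr rfl fun i _ => ?_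
        linear_combination (t * u i ^ 2 + s * v i ^ 2) * hts
    _ < t * (∑ i, (u i) ^ 2) + s * (∑ i, (v i) ^ 2) := by
        rw [Finset.sum_sub_distrib, Finset.sum_add_distrib, ← Finset.mul_sum,
          ← Finset.mul_sum, ← Finset.mul_sum]
        have : 0 < t * s * ∑ i, (u i - v i) ^ 2 :=
          mul_pos (mul_pos ht hs) hsum
        linarith
end

section
/- Suppose f : ℝᴺ → ℝᴺ is continuously differentiable, and let F(θ) = (J(θ)ᵀJ(θ))⁻¹ J(θ)ᵀ f(g(θ)). For any t₀ ∈ ℝ, ε > 0 and θ₀ ∈ ℝⁿ, if θ₁, θ₂ : ℝ → ℝⁿ both satisfy θᵢ(t₀) = θ₀ and θᵢ′(t) = F(θᵢ(t)) for all t ∈ [t₀, t₀ + ε] (i = 1, 2), then θ₁(t) = θ₂(t) for all t ∈ [t₀, t₀ + ε]; i.e., the solution of the Neural Galerkin dynamics on quadratic manifolds is unique. -/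
/-!
Since `Vᵀ W = 0`, also `Vᵀ K(θ) = 0`, so `J(θ)ᵀ J(θ) = I + K(θ)ᵀ K(θ)` is positive definite for
every `θ`. The entries of `J(θ)` are affine in `θ` and, by Cramer's rule, those of
`(J(θ)ᵀ J(θ))⁻¹` are rational in `θ` with nowhere vanishing denominator; hence `F` is `C¹` and
locally Lipschitz. Both trajectories stay in a compact set, on which `F` is Lipschitz, and
Grönwall's inequality gives uniqueness.
-/

open Matrix

section MatrixContDiff

variable {E : Type*} [NormedAddCommGroup E] [NormedSpace ℝ E] {k : WithTop ℕ∞}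
  {l m n : Type*}

theorem contDiff_det_of_entries [Fintype n] [DecidableEq n] {A : E → Matrix n n ℝ}
    (hA : ∀ i j, ContDiff ℝ k fun x => A x i j) : ContDiff ℝ k fun x => (A x).det := by
  simp_rw [det_apply']
  exact ContDiff.sum fun σ _ => contDiff_const.mul (contDiff_prod fun i _ => hA (σ i) i)

theorem contDiff_mul_apply_of_entries [Fintype m] {A : E → Matrix l m ℝ} {B : E → Matrix m n ℝ}
    (hA : ∀ i j, ContDiff ℝ k fun x => A x i j) (hB : ∀ i j, ContDiff ℝ k fun x => B x i j)
    (i : l) (j : n) : ContDiff ℝ k fun x => (A x * B x) i j := by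
  simp_rw [mul_apply]
  exact ContDiff.sum fun r _ => (hA i r).mul (hB r j)

theorem contDiff_mulVec_of_entries [Fintype l] [Fintype m] {A : E → Matrix l m ℝ} {v : E → m → ℝ}
    (hA : ∀ i j, ContDiff ℝ k fun x => A x i j) (hv : ContDiff ℝ k v) :
    ContDiff ℝ k fun x => A x *ᵥ v x := by
  rw [contDiff_pi]
  intro i
  simp_rw [mulVec, dotProduct]
  exact ContDiff.sum fun j _ => (hA i j).mul (contDiff_pi.mp hv j)

theorem contDiff_inv_apply_of_entries [Fintype n] [DecidableEq n] {A : E → Matrix n n ℝ}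
    (hA : ∀ i j, ContDiff ℝ k fun x => A x i j) (hdet : ∀ x, (A x).det ≠ 0) (i j : n) :
    ContDiff ℝ k fun x => (A x)⁻¹ i j := by
  have hinv : ∀ x, (A x)⁻¹ i j = ((A x).det)⁻¹ * ((A x).updateRow j (Pi.single i 1)).det := by
    intro x
    rw [inv_def, Ring.inverse_eq_inv', Matrix.smul_apply, adjugate_apply, smul_eq_mul]
  simp_rw [hinv]
  refine ((contDiff_det_of_entries hA).inv hdet).mul (contDiff_det_of_entries fun a b => ?_)
  rcases eq_or_ne a j with rfl | hne
  · simpa only [updateRow_self] using contDiff_const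
  · simpa only [updateRow_ne hne] using hA a b

end MatrixContDiff

theorem Matrix.mul_eq_zero_of_forall_mulVec_eq {R l m n p : Type*} [CommRing R]
    [Fintype m] [Fintype n] [Fintype p] {A : Matrix l m R} {B : Matrix m p R}
    {K : Matrix m n R} (L : (n → R) → p → R) (hAB : A * B = 0) (hK : ∀ v, K *ᵥ v = B *ᵥ L v) :
    A * K = 0 := by
  rw [ext_iff_mulVec]
  intro v
  rw [← mulVec_mulVec, hK, mulVec_mulVec, hAB, zero_mulVec, zero_mulVec]

theorem Matrix.posDef_transpose_mul_self_of_orthonormal_add {m n : Type*} [Fintype m]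
    [Fintype n] [DecidableEq n] {V K : Matrix m n ℝ} (hV : Vᵀ * V = 1) (hVK : Vᵀ * K = 0) :
    ((V + K)ᵀ * (V + K)).PosDef := by
  have hKV : Kᵀ * V = 0 := by rw [← transpose_transpose V, ← transpose_mul, hVK, transpose_zero]
  have hexpand : (V + K)ᵀ * (V + K) = 1 + Kᵀ * K := by
    rw [transpose_add, Matrix.add_mul, Matrix.mul_add, Matrix.mul_add, hV, hVK, hKV]
    abel
  rw [hexpand]
  exact PosDef.one.add_posSemidef (posSemidef_conjTranspose_mul_self K)

theorem ODE_solution_unique_of_locallyLipschitz {E : Type*} [NormedAddCommGroup E]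
    [NormedSpace ℝ E] {v : E → E} (hv : LocallyLipschitz v) {f g : ℝ → E} {a b : ℝ}
    (hf : ∀ t ∈ Set.Icc a b, HasDerivWithinAt f (v (f t)) (Set.Icc a b) t)
    (hg : ∀ t ∈ Set.Icc a b, HasDerivWithinAt g (v (g t)) (Set.Icc a b) t)
    (ha : f a = g a) : Set.EqOn f g (Set.Icc a b) := by
  have hfc : ContinuousOn f (Set.Icc a b) := fun t ht => (hf t ht).continuousWithinAt
  have hgc : ContinuousOn g (Set.Icc a b) := fun t ht => (hg t ht).continuousWithinAt
  set s := f '' Set.Icc a b ∪ g '' Set.Icc a b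
  have hs : IsCompact s :=
    (isCompact_Icc.image_of_continuousOn hfc).union (isCompact_Icc.image_of_continuousOn hgc)
  obtain ⟨K, hK⟩ := hv.locallyLipschitzOn.exists_lipschitzOnWith_of_compact hs
  exact ODE_solution_unique_of_mem_Icc_right (v := fun _ => v) (s := fun _ => s)
    (fun _ _ => hK) hfc
    (fun t ht => (hf t (Set.Ico_subset_Icc_self ht)).mono_of_mem_nhdsWithin
      (Icc_mem_nhdsGE_of_mem ht))
    (fun t ht => Or.inl ⟨t, Set.Ico_subset_Icc_self ht, rfl⟩) hgc
    (fun t ht => (hg t (Set.Ico_subset_Icc_self ht)).mono_of_mem_nhdsWithin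
      (Icc_mem_nhdsGE_of_mem ht))
    (fun t ht => Or.inr ⟨t, Set.Ico_subset_Icc_self ht, rfl⟩) ha

section QuadraticManifold

variable {N n : ℕ} {k : WithTop ℕ∞}

theorem contDiff_apply_of_mulVec_eq_symmTensor {W : Matrix (Fin N) (Fin n × Fin n) ℝ}
    {K : (Fin n → ℝ) → Matrix (Fin N) (Fin n) ℝ}
    (hK : ∀ θ v, K θ *ᵥ v = W *ᵥ (fun p => θ p.1 * v p.2 + v p.1 * θ p.2)) (i : Fin N)
    (j : Fin n) : ContDiff ℝ k fun θ => K θ i j := by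
  set e : Fin n → ℝ := Pi.single j 1 with he
  have hcol : ∀ θ, K θ i j = (W *ᵥ fun p => θ p.1 * e p.2 + e p.1 * θ p.2) i := by
    intro θ
    rw [← hK, he, mulVec_single_one, col_apply]
  have hsym : ContDiff ℝ k fun (θ : Fin n → ℝ) (p : Fin n × Fin n) =>
      θ p.1 * e p.2 + e p.1 * θ p.2 := by
    fun_prop
  simp_rw [hcol]
  exact contDiff_pi.mp
    (contDiff_mulVec_of_entries (A := fun _ => W) (fun _ _ => contDiff_const) hsym) i

theorem contDiff_quadraticDecoder {V : Matrix (Fin N) (Fin n) ℝ}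
    {W : Matrix (Fin N) (Fin n × Fin n) ℝ} {s₀ : Fin N → ℝ}
    {h : (Fin n → ℝ) → (Fin n × Fin n) → ℝ} (hh : ∀ θ p, h θ p = θ p.1 * θ p.2)
    {g : (Fin n → ℝ) → (Fin N → ℝ)} (hg : ∀ θ, g θ = s₀ + V *ᵥ θ + W *ᵥ h θ) :
    ContDiff ℝ k g := by
  have hh' : h = fun θ p => θ p.1 * θ p.2 := funext₂ hh
  rw [funext hg, hh']
  have hquad : ContDiff ℝ k fun (θ : Fin n → ℝ) (p : Fin n × Fin n) => θ p.1 * θ p.2 := by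
    fun_prop
  exact (contDiff_const.add
    (contDiff_mulVec_of_entries (A := fun _ => V) (fun _ _ => contDiff_const) contDiff_id)).add
    (contDiff_mulVec_of_entries (A := fun _ => W) (fun _ _ => contDiff_const) hquad)

end QuadraticManifold

theorem neural_galerkin_uniqueness_general
    (N n : ℕ)
    (V : Matrix (Fin N) (Fin n) ℝ) (W : Matrix (Fin N) (Fin n × Fin n) ℝ)
    (hV : Vᵀ * V = 1) (hVW : Vᵀ * W = 0)
    (s₀ : Fin N → ℝ)
    (h : (Fin n → ℝ) → (Fin n × Fin n) → ℝ)
    (hh : ∀ θ p, h θ p = θ p.1 * θ p.2)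
    (K : (Fin n → ℝ) → Matrix (Fin N) (Fin n) ℝ)
    (hK : ∀ θ v, (K θ).mulVec v = W.mulVec (fun p => θ p.1 * v p.2 + v p.1 * θ p.2))
    (g : (Fin n → ℝ) → (Fin N → ℝ))
    (hg : ∀ θ, g θ = s₀ + V.mulVec θ + W.mulVec (h θ))
    (f : (Fin N → ℝ) → (Fin N → ℝ)) (hf : ContDiff ℝ 1 f)
    (F : (Fin n → ℝ) → (Fin n → ℝ))
    (hF : ∀ θ, F θ = (((V + K θ)ᵀ * (V + K θ))⁻¹).mulVec ((V + K θ)ᵀ.mulVec (f (g θ))))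
    (t₀ ε : ℝ) (θ₀ : Fin n → ℝ)
    (θ₁ θ₂ : ℝ → (Fin n → ℝ))
    (hinit₁ : θ₁ t₀ = θ₀) (hinit₂ : θ₂ t₀ = θ₀)
    (hderiv₁ : ∀ t ∈ Set.Icc t₀ (t₀ + ε),
      HasDerivWithinAt θ₁ (F (θ₁ t)) (Set.Icc t₀ (t₀ + ε)) t)
    (hderiv₂ : ∀ t ∈ Set.Icc t₀ (t₀ + ε),
      HasDerivWithinAt θ₂ (F (θ₂ t)) (Set.Icc t₀ (t₀ + ε)) t) :
    ∀ t ∈ Set.Icc t₀ (t₀ + ε), θ₁ t = θ₂ t := by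
  have hJ : ∀ i j, ContDiff ℝ 1 fun θ => (V + K θ) i j := fun i j =>
    contDiff_const.add (contDiff_apply_of_mulVec_eq_symmTensor hK i j)
  have hJt : ∀ i j, ContDiff ℝ 1 fun θ => (V + K θ)ᵀ i j := fun i j => hJ j i
  have hVK : ∀ θ, Vᵀ * K θ = 0 := fun θ => mul_eq_zero_of_forall_mulVec_eq _ hVW (hK θ)
  have hdet : ∀ θ, ((V + K θ)ᵀ * (V + K θ)).det ≠ 0 := fun θ =>
    (posDef_transpose_mul_self_of_orthonormal_add hV (hVK θ)).det_pos.ne'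
  have hFC : ContDiff ℝ 1 F := by
    rw [funext hF]
    exact contDiff_mulVec_of_entries
      (contDiff_inv_apply_of_entries (contDiff_mul_apply_of_entries hJt hJ) hdet)
      (contDiff_mulVec_of_entries hJt (hf.comp (contDiff_quadraticDecoder hh hg)))
  exact ODE_solution_unique_of_locallyLipschitz hFC.locallyLipschitz hderiv₁ hderiv₂
    (hinit₁.trans hinit₂.symm)

/-- Uniqueness for the Neural Galerkin dynamics on quadratic manifolds: if
`θ₁, θ₂ : ℝ → ℝⁿ` both satisfy `θᵢ(t₀) = θ₀` and `θᵢ′(t) = F(θᵢ(t))` for all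
`t ∈ [t₀, t₀ + ε]`, then `θ₁ = θ₂` on `[t₀, t₀ + ε]`. -/
theorem neural_galerkin_uniqueness
    (N n : ℕ) (hN : 0 < N) (hn : 0 < n)
    (V : Matrix (Fin N) (Fin n) ℝ) (W : Matrix (Fin N) (Fin n × Fin n) ℝ)
    (hV : Vᵀ * V = 1) (hVW : Vᵀ * W = 0)
    (s₀ : Fin N → ℝ)
    (h : (Fin n → ℝ) → (Fin n × Fin n) → ℝ)
    (hh : ∀ θ p, h θ p = θ p.1 * θ p.2)
    (K : (Fin n → ℝ) → Matrix (Fin N) (Fin n) ℝ)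
    (hK : ∀ θ v, (K θ).mulVec v = W.mulVec (fun p => θ p.1 * v p.2 + v p.1 * θ p.2))
    (g : (Fin n → ℝ) → (Fin N → ℝ))
    (hg : ∀ θ, g θ = s₀ + V.mulVec θ + W.mulVec (h θ))
    (f : (Fin N → ℝ) → (Fin N → ℝ)) (hf : ContDiff ℝ 1 f)
    (F : (Fin n → ℝ) → (Fin n → ℝ))
    (hF : ∀ θ, F θ = (((V + K θ)ᵀ * (V + K θ))⁻¹).mulVec ((V + K θ)ᵀ.mulVec (f (g θ))))
    (t₀ ε : ℝ) (hε : 0 < ε) (θ₀ : Fin n → ℝ)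
    (θ₁ θ₂ : ℝ → (Fin n → ℝ))
    (hinit₁ : θ₁ t₀ = θ₀) (hinit₂ : θ₂ t₀ = θ₀)
    (hderiv₁ : ∀ t ∈ Set.Icc t₀ (t₀ + ε),
      HasDerivWithinAt θ₁ (F (θ₁ t)) (Set.Icc t₀ (t₀ + ε)) t)
    (hderiv₂ : ∀ t ∈ Set.Icc t₀ (t₀ + ε),
      HasDerivWithinAt θ₂ (F (θ₂ t)) (Set.Icc t₀ (t₀ + ε)) t) :
    ∀ t ∈ Set.Icc t₀ (t₀ + ε), θ₁ t = θ₂ t :=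
  neural_galerkin_uniqueness_general N n V W hV hVW s₀ h hh K hK g hg f hf F hF t₀ ε θ₀ θ₁ θ₂ hinit₁
    hinit₂ hderiv₁ hderiv₂
end

section
/- Let γ > 0 and define Φ(W) = ‖(VVᵀ − I)S + WZ‖_F² + γ‖W‖_F² on real N×p matrices W, where ‖·‖_F is the Frobenius norm. If W* minimizes Φ over all N×p real matrices, then VᵀW* = 0; that is, fitting the quadratic-manifold weight matrix by regularized least squares guarantees that its column space is orthogonal to the column space of V. -/
open Matrix

private lemma sumSq_eq_trace {N m : ℕ} (A : Matrix (Fin N) (Fin m) ℝ) :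
    (∑ i : Fin N, ∑ j : Fin m, (A i j) ^ 2) = Matrix.trace (Aᵀ * A) := by
  simp only [Matrix.trace, Matrix.diag, Matrix.mul_apply, Matrix.transpose_apply]
  rw [Finset.sum_comm]
  simp [sq]

private lemma sumSq_nonneg {N m : ℕ} (A : Matrix (Fin N) (Fin m) ℝ) :
    0 ≤ Matrix.trace (Aᵀ * A) := by
  rw [← sumSq_eq_trace]
  positivity

/-- Let `γ > 0` and `Φ(W) = ‖(VVᵀ − I)S + WZ‖_F² + γ‖W‖_F²` on real `N×p` matrices. If `W*`
minimizes `Φ` over all `N×p` real matrices, then `VᵀW* = 0`: fitting the quadratic-manifold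
weight matrix by regularized least squares guarantees that its column space is orthogonal to
the column space of `V`. -/
theorem regularized_fit_orthogonal
    (N n p M : ℕ) (hN : 0 < N) (hn : 0 < n) (hp : 0 < p) (hM : 0 < M)
    (V : Matrix (Fin N) (Fin n) ℝ) (hV : Vᵀ * V = 1)
    (S : Matrix (Fin N) (Fin M) ℝ) (Z : Matrix (Fin p) (Fin M) ℝ)
    (γ : ℝ) (hγ : 0 < γ)
    (Φ : Matrix (Fin N) (Fin p) ℝ → ℝ)
    (hΦ : ∀ Wm : Matrix (Fin N) (Fin p) ℝ,
      Φ Wm = (∑ i : Fin N, ∑ j : Fin M,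
          (((V * Vᵀ - 1) * S + Wm * Z : Matrix (Fin N) (Fin M) ℝ) i j) ^ 2) +
        γ * ∑ i : Fin N, ∑ j : Fin p, (Wm i j) ^ 2)
    (Wstar : Matrix (Fin N) (Fin p) ℝ)
    (hmin : ∀ Wm : Matrix (Fin N) (Fin p) ℝ, Φ Wstar ≤ Φ Wm) :
    Vᵀ * Wstar = 0 := by
  set P : Matrix (Fin N) (Fin N) ℝ := V * Vᵀ with hPdef
  have hPT : Pᵀ = P := by
    simp [hPdef, Matrix.transpose_mul]
  have hP2 : P * P = P := by
    calc P * P = V * (Vᵀ * V) * Vᵀ := by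
          simp [hPdef, Matrix.mul_assoc]
      _ = P := by rw [hV]; simp [hPdef]
  -- key algebraic identity
  have key : ∀ (m : ℕ) (A : Matrix (Fin N) (Fin m) ℝ),
      (A - P * A)ᵀ * (A - P * A) = Aᵀ * A - (P * A)ᵀ * (P * A) := by
    intro m A
    have hPA : (P * A)ᵀ * (P * A) = Aᵀ * (P * A) := by
      rw [Matrix.transpose_mul, hPT, Matrix.mul_assoc, ← Matrix.mul_assoc P P A, hP2]
    have hPA2 : (P * A)ᵀ * A = Aᵀ * (P * A) := by
      rw [Matrix.transpose_mul, hPT, Matrix.mul_assoc]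
    rw [Matrix.transpose_sub, Matrix.sub_mul, Matrix.mul_sub, Matrix.mul_sub, hPA, hPA2]
    abel
  -- the competitor
  set W' : Matrix (Fin N) (Fin p) ℝ := Wstar - P * Wstar with hW'def
  set R : Matrix (Fin N) (Fin M) ℝ := (P - 1) * S + Wstar * Z with hRdef
  have hR' : (P - 1) * S + W' * Z = R - P * R := by
    have hPR : P * R = P * (Wstar * Z) := by
      rw [hRdef, Matrix.mul_add, ← Matrix.mul_assoc, Matrix.mul_sub, hP2]
      simp
    have h4 : (Wstar - P * Wstar) * Z = Wstar * Z - P * (Wstar * Z) := by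
      rw [Matrix.sub_mul, Matrix.mul_assoc]
    rw [hPR, hW'def, h4, hRdef]
    abel
  have h1 := hmin W'
  rw [hΦ, hΦ] at h1
  rw [sumSq_eq_trace, sumSq_eq_trace, sumSq_eq_trace, sumSq_eq_trace] at h1
  rw [hR', key M R] at h1
  have hWkey : W'ᵀ * W' = Wstarᵀ * Wstar - (P * Wstar)ᵀ * (P * Wstar) := key p Wstar
  rw [hWkey] at h1
  rw [Matrix.trace_sub, Matrix.trace_sub] at h1
  have hX : 0 ≤ Matrix.trace ((P * R)ᵀ * (P * R)) := sumSq_nonneg _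
  have hY : 0 ≤ Matrix.trace ((P * Wstar)ᵀ * (P * Wstar)) := sumSq_nonneg _
  have hY0 : Matrix.trace ((P * Wstar)ᵀ * (P * Wstar)) = 0 := by nlinarith
  have hPW : P * Wstar = 0 := by
    have hs : (∑ i : Fin N, ∑ j : Fin p, ((P * Wstar) i j) ^ 2) = 0 := by
      rw [sumSq_eq_trace]; exact hY0
    ext i j
    have h2 : ∀ i ∈ Finset.univ, (∑ j : Fin p, ((P * Wstar) i j) ^ 2) = 0 := by
      intro i _
      have := Finset.sum_eq_zero_iff_of_nonneg (fun i _ =>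
        Finset.sum_nonneg fun j _ => sq_nonneg ((P * Wstar) i j)) |>.mp hs
      exact this i (Finset.mem_univ i)
    have h3 := Finset.sum_eq_zero_iff_of_nonneg
      (fun j _ => sq_nonneg ((P * Wstar) i j)) |>.mp (h2 i (Finset.mem_univ i))
    have := h3 j (Finset.mem_univ j)
    simpa using pow_eq_zero_iff (n := 2) (by norm_num) |>.mp this
  have : Vᵀ * (P * Wstar) = Vᵀ * Wstar := by
    rw [hPdef, ← Matrix.mul_assoc, ← Matrix.mul_assoc, hV, Matrix.one_mul]
  rw [hPW] at this
  rw [← this]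
  simp
end
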